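/- Let G be a group with the word metric coming from a finite generating set, let H be a subgroup of G, and let g ∈ G be an element of infinite order. If the cyclic subgroup ⟨g⟩ generated by g is coarsely contained in H, then there exists an integer n ≥ 1 such that gⁿ ∈ H. -/

import Mathlib

open Pointwise

/-- The word length of `g` with respect to the generating set `S`: the least `n` such that
`g` is a product of `n` elements of `S ∪ S⁻¹`. -/
noncomputable def wordLength {G : Type*} [Group G] (S : Set G) (g : G) : ℕ :=
  sInf {n : ℕ | g ∈ (S ∪ S⁻¹) ^ n}

/-- `dist` on `G` is the word metric coming from the finite generating set `S`. -/
def IsWordMetric {G : Type*} [Group G] [MetricSpace G] (S : Set G) : Prop :=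
  S.Finite ∧ Subgroup.closure S = ⊤ ∧
    ∀ g h : G, dist g h = (wordLength S (g⁻¹ * h) : ℝ)

/-- `A` is coarsely contained in `B`: some `r ≥ 0` works so that every point of `A` is within
distance `r` of some point of `B`. -/
def CoarselyContained {X : Type*} [MetricSpace X] (A B : Set X) : Prop :=
  ∃ r : ℝ, 0 ≤ r ∧ ∀ a ∈ A, ∃ b ∈ B, dist a b ≤ r

/-! If every `gᵏ` is within `r` of some `hₖ ∈ H`, then `g⁻ᵏ H = (g⁻ᵏ hₖ) H` with `g⁻ᵏ hₖ` in the
`r`-ball about `1`, which is finite for a word metric. So the cosets `g⁻ᵏ H` take finitely many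
values; by pigeonhole `g⁻ᵃ H = g⁻ᵇ H` for some `a < b`, i.e. `gᵇ⁻ᵃ ∈ H`. -/

protected lemma Set.Finite.pow {M : Type*} [Monoid M] {s : Set M} (hs : s.Finite) (n : ℕ) :
    (s ^ n).Finite := by
  induction n with
  | zero => simp
  | succ n ih => rw [pow_succ]; exact ih.mul hs

lemma QuotientGroup.exists_pow_mem_of_finite_range_mk {G : Type*} [Group G] {H : Subgroup G}
    {g : G} (h : (Set.range fun k : ℕ => ((g ^ k : G) : G ⧸ H)).Finite) :
    ∃ n : ℕ, 1 ≤ n ∧ g ^ n ∈ H := by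
  obtain ⟨a, b, hab, heq⟩ := h.exists_lt_map_eq_of_forall_mem Set.mem_range_self
  refine ⟨b - a, by omega, ?_⟩
  rwa [QuotientGroup.eq, ← pow_mul_pow_sub g hab.le, inv_mul_cancel_left] at heq

section WordLength

variable {G : Type*} [Group G] {S : Set G}

lemma exists_mem_pow_of_closure_eq_top (hS : Subgroup.closure S = ⊤) (x : G) :
    ∃ n : ℕ, x ∈ (S ∪ S⁻¹) ^ n := by
  have hx : x ∈ Submonoid.closure (S ∪ S⁻¹) := by
    rw [← Subgroup.closure_toSubmonoid, hS]
    trivial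
  induction hx using Submonoid.closure_induction with
  | mem y hy => exact ⟨1, by rwa [pow_one]⟩
  | one => exact ⟨0, Set.mem_one.2 rfl⟩
  | mul y z _ _ hy hz =>
    obtain ⟨m, hy⟩ := hy
    obtain ⟨n, hz⟩ := hz
    exact ⟨m + n, pow_add (S ∪ S⁻¹) m n ▸ Set.mul_mem_mul hy hz⟩

lemma mem_pow_wordLength (hS : Subgroup.closure S = ⊤) (x : G) :
    x ∈ (S ∪ S⁻¹) ^ wordLength S x :=
  Nat.sInf_mem (exists_mem_pow_of_closure_eq_top hS x)

lemma finite_setOf_wordLength_le (hfin : S.Finite) (hS : Subgroup.closure S = ⊤) (N : ℕ) :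
    {x : G | wordLength S x ≤ N}.Finite :=
  ((Set.finite_Iic N).biUnion fun n _ => (hfin.union hfin.inv).pow n).subset
    fun x hx => Set.mem_biUnion hx (mem_pow_wordLength hS x)

variable [MetricSpace G]

lemma IsWordMetric.isIsometricSMul (hS : IsWordMetric S) : IsIsometricSMul G G :=
  ⟨fun c => Isometry.of_dist_eq fun x y => by
    simp only [smul_eq_mul, hS.2.2, mul_inv_rev, mul_assoc, inv_mul_cancel_left]⟩

lemma IsWordMetric.finite_closedBall_one (hS : IsWordMetric S) (r : ℝ) :
    (Metric.closedBall (1 : G) r).Finite := by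
  refine (finite_setOf_wordLength_le hS.1 hS.2.1 ⌊r⌋₊).subset fun x hx => ?_
  rw [Metric.mem_closedBall', hS.2.2, inv_one, one_mul] at hx
  exact Nat.le_floor hx

end WordLength

lemma exists_pow_mem_of_zpowers_coarselyContained_of_finite_closedBall {G : Type*} [Group G]
    [MetricSpace G] [IsIsometricSMul G G] (hball : ∀ r : ℝ, (Metric.closedBall (1 : G) r).Finite)
    {H : Subgroup G} {g : G}
    (hcc : CoarselyContained ((Subgroup.zpowers g : Subgroup G) : Set G) (H : Set G)) :
    ∃ n : ℕ, 1 ≤ n ∧ g ^ n ∈ H := by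
  obtain ⟨r, -, hcc⟩ := hcc
  have hcoset : ∀ k : ℕ, ∃ c ∈ Metric.closedBall (1 : G) r, (c : G ⧸ H) = (g⁻¹ ^ k : G) := by
    intro k
    obtain ⟨h, hH, hdist⟩ := hcc (g ^ k) ⟨k, zpow_natCast g k⟩
    refine ⟨(g ^ k)⁻¹ * h, ?_, ?_⟩
    · rwa [Metric.mem_closedBall', ← dist_mul_left (g ^ k), mul_one, mul_inv_cancel_left]
    · rw [inv_pow, QuotientGroup.mk_mul_of_mem _ hH]
  have hfin : (Set.range fun k : ℕ => ((g⁻¹ ^ k : G) : G ⧸ H)).Finite :=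
    ((hball r).image _).subset <| Set.range_subset_iff.2 hcoset
  obtain ⟨n, hn, hgn⟩ := QuotientGroup.exists_pow_mem_of_finite_range_mk hfin
  exact ⟨n, hn, by simpa only [inv_pow, inv_mem_iff] using hgn⟩

theorem exists_pow_mem_of_zpowers_coarselyContained_general {G : Type*} [Group G] [MetricSpace G]
    (S : Set G) (hS : IsWordMetric S) (H : Subgroup G) (g : G)
    (hcc : CoarselyContained ((Subgroup.zpowers g : Subgroup G) : Set G) (H : Set G)) :
    ∃ n : ℕ, 1 ≤ n ∧ g ^ n ∈ H :=
  have := hS.isIsometricSMul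
  exists_pow_mem_of_zpowers_coarselyContained_of_finite_closedBall hS.finite_closedBall_one hcc

/-- If `g` has infinite order and the cyclic subgroup `⟨g⟩` is coarsely contained in the
subgroup `H`, then some positive power of `g` lies in `H`. -/
theorem exists_pow_mem_of_zpowers_coarselyContained {G : Type*} [Group G] [MetricSpace G]
    (S : Set G) (hS : IsWordMetric S) (H : Subgroup G) (g : G)
    (hg : ∀ n : ℕ, 1 ≤ n → g ^ n ≠ 1)
    (hcc : CoarselyContained ((Subgroup.zpowers g : Subgroup G) : Set G) (H : Set G)) :
    ∃ n : ℕ, 1 ≤ n ∧ g ^ n ∈ H :=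
  exists_pow_mem_of_zpowers_coarselyContained_general S hS H g hcc
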